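/- arXiv:2401.08163 — 3 statements merged into one kernel-verified Lean document; each statement's English description precedes it below -/
import Mathlib

section
/- For closed sets $S_1,\ldots,S_p \subset \mathbb{R}^n$ and a point $\bar x$ in their union, the limiting tangent cone to the union at $\bar x$ equals the union of the limiting tangent cones $T^{\#}_{S_i}(\bar x)$ over all indices $i$ with $\bar x \in S_i$. -/
open Filter Topology Set

/-- Tangent (contingent) cone via sequences. -/
def seqTangent {E : Type*} [AddCommGroup E] [Module ℝ E] [TopologicalSpace E]
    (C : Set E) (x : E) : Set E :=
  {d | ∃ (dk : ℕ → E) (tk : ℕ → ℝ),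
    Tendsto dk atTop (𝓝 d) ∧ Tendsto tk atTop (𝓝 0) ∧
    (∀ k, 0 < tk k) ∧ ∀ k, x + tk k • dk k ∈ C}

/-- Limiting tangent cone. -/
def limitingTangent {E : Type*} [AddCommGroup E] [Module ℝ E] [TopologicalSpace E]
    (C : Set E) (xb : E) : Set E :=
  {d | ∃ (xk : ℕ → E) (dk : ℕ → E),
    Tendsto xk atTop (𝓝 xb) ∧ Tendsto dk atTop (𝓝 d) ∧
    ∀ k, xk k ∈ C ∧ dk k ∈ seqTangent C (xk k)}

/-- Paratingent cone. -/
def paratingent {E : Type*} [AddCommGroup E] [Module ℝ E] [TopologicalSpace E]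
    (C : Set E) (xb : E) : Set E :=
  {d | ∃ (xk dk : ℕ → E) (tk : ℕ → ℝ),
    Tendsto xk atTop (𝓝 xb) ∧ Tendsto dk atTop (𝓝 d) ∧ Tendsto tk atTop (𝓝 0) ∧
    (∀ k, 0 < tk k) ∧ ∀ k, xk k ∈ C ∧ xk k + tk k • dk k ∈ C}

/-- Pigeonhole: a sequence into a finite type is eventually constant along a subsequence. -/
lemma pigeon_subseq {p : ℕ} (f : ℕ → Fin p) :
    ∃ (i : Fin p) (φ : ℕ → ℕ), StrictMono φ ∧ ∀ m, f (φ m) = i := by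
  obtain ⟨i, hi⟩ := Finite.exists_infinite_fiber f
  have hinf : {k | f k = i}.Infinite := by
    have : (f ⁻¹' {i}).Infinite := (Set.infinite_coe_iff (s := f ⁻¹' {i})).mp hi
    simpa [Set.preimage, Set.mem_singleton_iff] using this
  exact ⟨i, Nat.nth (fun k => f k = i), Nat.nth_strictMono hinf,
    fun m => Nat.nth_mem_of_infinite hinf m⟩

/-- Monotonicity of seqTangent. -/
lemma seqTangent_mono {E : Type*} [AddCommGroup E] [Module ℝ E] [TopologicalSpace E]
    {C D : Set E} (h : C ⊆ D) (x : E) : seqTangent C x ⊆ seqTangent D x := by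
  rintro d ⟨dk, tk, hdk, htk, hpos, hmem⟩
  exact ⟨dk, tk, hdk, htk, hpos, fun k => h (hmem k)⟩

/-- seqTangent of a finite union decomposes. -/
lemma seqTangent_union {n p : ℕ} (S : Fin p → Set (EuclideanSpace ℝ (Fin n)))
    (x d : EuclideanSpace ℝ (Fin n)) (hd : d ∈ seqTangent (⋃ i, S i) x) :
    ∃ i, d ∈ seqTangent (S i) x := by
  obtain ⟨dk, tk, hdk, htk, hpos, hmem⟩ := hd
  have hch : ∀ m, ∃ i, x + tk m • dk m ∈ S i := fun m => mem_iUnion.mp (hmem m)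
  choose j hj using hch
  obtain ⟨i, φ, hφ, hji⟩ := pigeon_subseq j
  refine ⟨i, dk ∘ φ, tk ∘ φ, hdk.comp hφ.tendsto_atTop, htk.comp hφ.tendsto_atTop,
    fun m => hpos (φ m), fun m => ?_⟩
  have := hj (φ m); rwa [hji m] at this

/-- A point with nonempty seqTangent in a closed set lies in the set. -/
lemma mem_of_seqTangent {n : ℕ} {C : Set (EuclideanSpace ℝ (Fin n))} (hC : IsClosed C)
    {x d : EuclideanSpace ℝ (Fin n)} (hd : d ∈ seqTangent C x) : x ∈ C := by
  obtain ⟨dk, tk, hdk, htk, hpos, hmem⟩ := hd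
  have hlim : Tendsto (fun k => x + tk k • dk k) atTop (𝓝 (x + (0 : ℝ) • d)) :=
    tendsto_const_nhds.add (htk.smul hdk)
  rw [zero_smul, add_zero] at hlim
  exact hC.mem_of_tendsto hlim (Eventually.of_forall hmem)

theorem limiting_tangent_cone_union {n p : ℕ} (S : Fin p → Set (EuclideanSpace ℝ (Fin n)))
    (hS : ∀ i, IsClosed (S i)) (xb : EuclideanSpace ℝ (Fin n))
    (hx : xb ∈ ⋃ i, S i) :
    limitingTangent (⋃ i, S i) xb = ⋃ i, ⋃ _ : xb ∈ S i, limitingTangent (S i) xb := by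
  ext d
  simp only [mem_iUnion]
  constructor
  · rintro ⟨xk, dk, hxk, hdk, h⟩
    have hch : ∀ k, ∃ i, dk k ∈ seqTangent (S i) (xk k) :=
      fun k => seqTangent_union S (xk k) (dk k) (h k).2
    choose j hj using hch
    obtain ⟨i, φ, hφ, hji⟩ := pigeon_subseq j
    have hmemS : ∀ m, xk (φ m) ∈ S i := fun m => by
      have := hj (φ m); rw [hji m] at this
      exact mem_of_seqTangent (hS i) this
    have hxk' : Tendsto (xk ∘ φ) atTop (𝓝 xb) := hxk.comp hφ.tendsto_atTop
    have hxbS : xb ∈ S i := (hS i).mem_of_tendsto hxk' (Eventually.of_forall hmemS)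
    refine ⟨i, hxbS, xk ∘ φ, dk ∘ φ, hxk', hdk.comp hφ.tendsto_atTop, fun m => ?_⟩
    refine ⟨hmemS m, ?_⟩
    have := hj (φ m); rwa [hji m] at this
  · rintro ⟨i, hxi, xk, dk, hxk, hdk, h⟩
    exact ⟨xk, dk, hxk, hdk, fun k =>
      ⟨mem_iUnion.mpr ⟨i, (h k).1⟩,
        seqTangent_mono (subset_iUnion S i) (xk k) (h k).2⟩⟩
end

section
/- For $S_1 := \mathbb{R} \times \{0\}$ and $S_2 := \{0\} \times \mathbb{R}$ in $\mathbb{R}^2$ and $\bar x := (0,0)$, the paratingent cone to the union $S_1 \cup S_2$ at $\bar x$ is all of $\mathbb{R}^2$, which strictly contains $T^{\mathrm{P}}_{S_1}(\bar x) \cup T^{\mathrm{P}}_{S_2}(\bar x) = S_1 \cup S_2$; hence the union formula for the paratingent cone fails in general. -/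
open Filter Topology Set

section Submodule

variable {E : Type*} [AddCommGroup E] [Module ℝ E] [TopologicalSpace E]

/-- A difference quotient of two points of `V` stays in `V`, so the limit direction does too. -/
lemma paratingent_submodule_subset (V : Submodule ℝ E) (hV : IsClosed (V : Set E)) (x : E) :
    paratingent (V : Set E) x ⊆ V := by
  rintro d ⟨xk, dk, tk, -, hd, -, htk, hmem⟩
  refine hV.mem_of_tendsto hd (Eventually.of_forall fun k => ?_)
  have hdiff : (xk k + tk k • dk k) - xk k ∈ V := V.sub_mem (hmem k).2 (hmem k).1
  simpa [smul_smul, (htk k).ne'] using V.smul_mem (tk k)⁻¹ hdiff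

lemma subset_paratingent_submodule (V : Submodule ℝ E) {x : E} (hx : x ∈ V) :
    (V : Set E) ⊆ paratingent V x := fun d hd =>
  ⟨fun _ => x, fun _ => d, fun k => 1 / (k + 1), tendsto_const_nhds, tendsto_const_nhds,
    tendsto_one_div_add_atTop_nhds_zero_nat, fun _ => Nat.one_div_pos_of_nat,
    fun _ => ⟨hx, V.add_mem hx (V.smul_mem _ hd)⟩⟩

lemma paratingent_submodule (V : Submodule ℝ E) (hV : IsClosed (V : Set E)) {x : E}
    (hx : x ∈ V) : paratingent (V : Set E) x = V :=
  (paratingent_submodule_subset V hV x).antisymm (subset_paratingent_submodule V hx)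

/-- Base points `-t • w ∈ W` jump to `-t • w + t • (v + w) = t • v ∈ V`. -/
lemma add_mem_paratingent_union [ContinuousSMul ℝ E] (V W : Submodule ℝ E) {v w : E}
    (hv : v ∈ V) (hw : w ∈ W) : v + w ∈ paratingent ((V : Set E) ∪ W) 0 := by
  have ht : Tendsto (fun k : ℕ => 1 / ((k : ℝ) + 1)) atTop (𝓝 0) :=
    tendsto_one_div_add_atTop_nhds_zero_nat
  refine ⟨fun k => -(1 / ((k : ℝ) + 1)) • w, fun _ => v + w, fun k => 1 / (k + 1), ?_,
    tendsto_const_nhds, ht, fun _ => Nat.one_div_pos_of_nat, fun k => ⟨Or.inr ?_, Or.inl ?_⟩⟩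
  · simpa using ht.neg.smul_const w
  · exact W.smul_mem _ hw
  · simpa [smul_add] using V.smul_mem (1 / ((k : ℝ) + 1)) hv

end Submodule

lemma paratingent_coord_eq_zero {ι : Type*} [Fintype ι] (i : ι) :
    paratingent {x : EuclideanSpace ℝ ι | x i = 0} 0 = {x | x i = 0} :=
  paratingent_submodule (LinearMap.ker (EuclideanSpace.proj (𝕜 := ℝ) (ι := ι) i).toLinearMap)
    (EuclideanSpace.proj i).isClosed_ker (zero_mem _)

theorem paratingent_union_formula_fails :
    paratingent ({x : EuclideanSpace ℝ (Fin 2) | x 1 = 0} ∪ {x : EuclideanSpace ℝ (Fin 2) | x 0 = 0}) 0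
      = (Set.univ : Set (EuclideanSpace ℝ (Fin 2))) ∧
    paratingent {x : EuclideanSpace ℝ (Fin 2) | x 1 = 0} 0
        ∪ paratingent {x : EuclideanSpace ℝ (Fin 2) | x 0 = 0} 0
      = {x : EuclideanSpace ℝ (Fin 2) | x 1 = 0} ∪ {x : EuclideanSpace ℝ (Fin 2) | x 0 = 0} ∧
    ({x : EuclideanSpace ℝ (Fin 2) | x 1 = 0} ∪ {x : EuclideanSpace ℝ (Fin 2) | x 0 = 0})
      ≠ (Set.univ : Set (EuclideanSpace ℝ (Fin 2))) := by
  refine ⟨eq_univ_of_forall fun d => ?_, by rw [paratingent_coord_eq_zero, paratingent_coord_eq_zero],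
    fun h => ?_⟩
  · have hsplit := add_mem_paratingent_union
      (LinearMap.ker (EuclideanSpace.proj (𝕜 := ℝ) (ι := Fin 2) 1).toLinearMap)
      (LinearMap.ker (EuclideanSpace.proj (𝕜 := ℝ) (ι := Fin 2) 0).toLinearMap)
      (v := d - EuclideanSpace.single 1 (d 1)) (w := EuclideanSpace.single 1 (d 1))
      (by simp) (by simp)
    rwa [sub_add_cancel] at hsplit
  · have hones : (!₂[1, 1] : EuclideanSpace ℝ (Fin 2)) ∈ ({x : EuclideanSpace ℝ (Fin 2) | x 1 = 0} ∪
        {x | x 0 = 0}) := h ▸ mem_univ _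
    rcases hones with hones | hones <;> simp at hones
end

section
/- Let $\Phi : \mathbb{R}^n \to \mathbb{R}^m$ be continuously differentiable with Lipschitz derivative near $\bar x$, let $D \subset \mathbb{R}^m$ be closed, and let $C := \{x \mid \Phi(x) \in D\}$. If $\Phi'(\bar x)$ has full row rank $m$, then $T^{\mathrm{P}}_C(\bar x) = \{d \in \mathbb{R}^n \mid \Phi'(\bar x)d \in T^{\mathrm{P}}_D(\Phi(\bar x))\}$. -/
/-! The inclusion `⊆` needs only strict differentiability: along a paratingent sequence
`(x_k, d_k, t_k)` the difference quotients `(Φ (x_k + t_k d_k) - Φ x_k) / t_k` converge to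
`Φ'(x̄) d`. For `⊇`, metric regularity of `Φ` at `x̄` (Graves' theorem, from a bounded right
inverse of the surjective derivative) first lifts the base points `y_k ∈ D` to `x_k` with
`Φ x_k = y_k`, and then lifts `y_k + t_k e_k` to a point `x'_k` whose distance to `x_k + t_k d`
is at most `κ ‖y_k + t_k e_k - Φ (x_k + t_k d)‖ = o(t_k)`; so `(x'_k - x_k) / t_k → d`. -/

open Filter Topology Set

lemma mem_paratingent_of_eventually {E : Type*} [AddCommGroup E] [Module ℝ E]
    [TopologicalSpace E] {C : Set E} {xb d : E} {xk dk : ℕ → E} {tk : ℕ → ℝ}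
    (hxk : Tendsto xk atTop (𝓝 xb)) (hdk : Tendsto dk atTop (𝓝 d))
    (htk : Tendsto tk atTop (𝓝 0))
    (h : ∀ᶠ k in atTop, 0 < tk k ∧ xk k ∈ C ∧ xk k + tk k • dk k ∈ C) :
    d ∈ paratingent C xb := by
  obtain ⟨N, hN⟩ := eventually_atTop.1 h
  have hshift := tendsto_add_atTop_nat N
  exact ⟨fun k => xk (k + N), fun k => dk (k + N), fun k => tk (k + N), hxk.comp hshift,
    hdk.comp hshift, htk.comp hshift, fun k => (hN _ (Nat.le_add_left N k)).1,
    fun k => (hN _ (Nat.le_add_left N k)).2⟩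

theorem norm_inv_smul_sub_sub_le {E F : Type*} [NormedAddCommGroup E] [NormedSpace ℝ E]
    [NormedAddCommGroup F] [NormedSpace ℝ F] {f : E → F} {t κ : ℝ} {x x' d : E} {y e : F}
    (ht : 0 < t) (hy : f x = y)
    (hx' : dist x' (x + t • d) ≤ κ * dist (y + t • e) (f (x + t • d))) :
    ‖t⁻¹ • (x' - x) - d‖ ≤ κ * ‖e - t⁻¹ • (f (x + t • d) - f x)‖ := by
  have hdiff : t⁻¹ • (x' - x) - d = t⁻¹ • (x' - (x + t • d)) := by
    rw [smul_sub, smul_sub, smul_add, inv_smul_smul₀ ht.ne']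
    abel
  have hsplit : y + t • e - f (x + t • d) = t • (e - t⁻¹ • (f (x + t • d) - f x)) := by
    rw [smul_sub, smul_inv_smul₀ ht.ne', ← hy]
    abel
  calc ‖t⁻¹ • (x' - x) - d‖ = t⁻¹ * dist x' (x + t • d) := by
        rw [hdiff, norm_smul, Real.norm_of_nonneg (inv_nonneg.2 ht.le), dist_eq_norm]
    _ ≤ t⁻¹ * (κ * dist (y + t • e) (f (x + t • d))) := by gcongr
    _ = κ * ‖e - t⁻¹ • (f (x + t • d) - f x)‖ := by
        rw [dist_eq_norm, hsplit, norm_smul, Real.norm_of_nonneg ht.le]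
        field_simp

namespace HasStrictFDerivAt

variable {E F : Type*} [NormedAddCommGroup E] [NormedSpace ℝ E]
  [NormedAddCommGroup F] [NormedSpace ℝ F] {f : E → F} {f' : E →L[ℝ] F} {a : E}

theorem tendsto_inv_smul_sub {ι : Type*} {l : Filter ι} (hf : HasStrictFDerivAt f f' a)
    {xk dk : ι → E} {tk : ι → ℝ} {d : E}
    (hxk : Tendsto xk l (𝓝 a)) (hdk : Tendsto dk l (𝓝 d)) (htk : Tendsto tk l (𝓝 0))
    (htk_ne : ∀ᶠ k in l, tk k ≠ 0) :
    Tendsto (fun k => (tk k)⁻¹ • (f (xk k + tk k • dk k) - f (xk k))) l (𝓝 (f' d)) := by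
  have hstep : Tendsto (fun k => tk k • dk k) l (𝓝 0) := by simpa using htk.smul hdk
  have hpair : Tendsto (fun k => (xk k + tk k • dk k, xk k)) l (𝓝 (a, a)) := by
    simpa using (hxk.add hstep).prodMk_nhds hxk
  have hstep_O : (fun k => tk k • dk k) =O[l] tk := by
    simpa using (Asymptotics.isBigO_refl tk l).smul (hdk.isBigO_one ℝ)
  have hrem : (fun k => f (xk k + tk k • dk k) - f (xk k) - f' (tk k • dk k)) =o[l] tk := by
    have := hf.isLittleO.comp_tendsto hpair
    simp only [Function.comp_def, add_sub_cancel_left] at this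
    exact this.trans_isBigO hstep_O
  have hlin : Tendsto (fun k => f' (dk k)) l (𝓝 (f' d)) := (f'.continuous.tendsto d).comp hdk
  have hsum := hlin.add hrem.tendsto_inv_smul_nhds_zero
  rw [add_zero] at hsum
  refine hsum.congr' ?_
  filter_upwards [htk_ne] with k hk
  rw [map_smul, smul_sub, inv_smul_smul₀ hk, add_sub_cancel]

theorem paratingent_preimage_subset (hf : HasStrictFDerivAt f f' a) (D : Set F) :
    paratingent (f ⁻¹' D) a ⊆ f' ⁻¹' paratingent D (f a) := by
  rintro d ⟨xk, dk, tk, hxk, hdk, htk, htk_pos, hmem⟩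
  refine ⟨fun k => f (xk k), fun k => (tk k)⁻¹ • (f (xk k + tk k • dk k) - f (xk k)), tk,
    hf.continuousAt.tendsto.comp hxk,
    hf.tendsto_inv_smul_sub hxk hdk htk (.of_forall fun k => (htk_pos k).ne'), htk, htk_pos,
    fun k => ⟨(hmem k).1, ?_⟩⟩
  rw [smul_inv_smul₀ (htk_pos k).ne', add_sub_cancel]
  exact (hmem k).2

variable [CompleteSpace E] [CompleteSpace F]

-- Metric regularity of `f` at `a`.
theorem exists_eventually_exists_dist_le (hf : HasStrictFDerivAt f f' a)
    (hsurj : f'.range = ⊤) :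
    ∃ κ : ℝ, ∀ᶠ p in 𝓝 (a, f a), ∃ x, f x = p.2 ∧ dist x p.1 ≤ κ * dist p.2 (f p.1) := by
  obtain ⟨g, hg⟩ := f'.exists_nonlinearRightInverse_of_surjective hsurj
  set c : NNReal := g.nnnorm⁻¹ / 2 with hc_def
  have hc : 0 < c := by simp [hc_def, hg]
  obtain ⟨s, hs, happrox⟩ := hf.approximates_deriv_on_nhds (Or.inr hc)
  obtain ⟨r, hr, hball⟩ := Metric.mem_nhds_iff.1 hs
  refine ⟨(c : ℝ)⁻¹, ?_⟩
  have hlim : Tendsto (fun p : E × F => dist p.1 a + (c : ℝ)⁻¹ * dist p.2 (f p.1))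
      (𝓝 (a, f a)) (𝓝 0) := by
    have hfst : ContinuousAt (fun p : E × F => f p.1) (a, f a) :=
      hf.continuousAt.comp continuousAt_fst
    simpa using (continuousAt_fst.dist (tendsto_const_nhds (x := a))).add
      ((continuousAt_snd.dist hfst).const_mul (c : ℝ)⁻¹)
  filter_upwards [hlim.eventually_lt_const hr] with ⟨b, y⟩ hby
  have hsub : Metric.closedBall b ((c : ℝ)⁻¹ * dist y (f b)) ⊆ s := fun z hz =>
    hball <| calc dist z a ≤ dist z b + dist b a := dist_triangle _ _ _
      _ < r := by linarith [Metric.mem_closedBall.1 hz]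
  have hradius : ((g.nnnorm : ℝ)⁻¹ - c) * ((c : ℝ)⁻¹ * dist y (f b)) = dist y (f b) := by
    have : (g.nnnorm : ℝ)⁻¹ = 2 * c := by simp [hc_def]; ring
    rw [this]; field_simp; ring
  obtain ⟨x, hx, hfx⟩ := happrox.surjOn_closedBall_of_nonlinearRightInverse g (by positivity) hsub
    (show y ∈ _ by rw [hradius]; exact Metric.mem_closedBall.2 le_rfl)
  exact ⟨x, hfx, hx⟩

theorem exists_seq_dist_le (hf : HasStrictFDerivAt f f' a) (hsurj : f'.range = ⊤) :
    ∃ κ : ℝ, ∀ {bk : ℕ → E} {yk : ℕ → F}, Tendsto bk atTop (𝓝 a) →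
      Tendsto yk atTop (𝓝 (f a)) → ∃ xk : ℕ → E,
        ∀ᶠ k in atTop, f (xk k) = yk k ∧ dist (xk k) (bk k) ≤ κ * dist (yk k) (f (bk k)) := by
  obtain ⟨κ, hreg⟩ := hf.exists_eventually_exists_dist_le hsurj
  exact ⟨κ, fun hbk hyk => ((hbk.prodMk_nhds hyk).eventually hreg).choice⟩

theorem preimage_paratingent_subset (hf : HasStrictFDerivAt f f' a) (hsurj : f'.range = ⊤)
    (D : Set F) : f' ⁻¹' paratingent D (f a) ⊆ paratingent (f ⁻¹' D) a := by
  rintro d ⟨yk, ek, tk, hyk, hek, htk, htk_pos, hmem⟩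
  obtain ⟨κ, hsolve⟩ := hf.exists_seq_dist_le hsurj
  obtain ⟨xk, hxk⟩ := hsolve tendsto_const_nhds hyk
  have hxk_lim : Tendsto xk atTop (𝓝 a) := by
    rw [tendsto_iff_dist_tendsto_zero]
    refine squeeze_zero' (.of_forall fun _ => dist_nonneg) (hxk.mono fun k hk => hk.2) ?_
    simpa using (tendsto_iff_dist_tendsto_zero.1 hyk).const_mul κ
  obtain ⟨xk', hxk'⟩ := hsolve (by simpa using hxk_lim.add (htk.smul_const d))
    (by simpa using hyk.add (htk.smul hek))
  have hquot := hf.tendsto_inv_smul_sub hxk_lim (tendsto_const_nhds (x := d)) htk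
    (.of_forall fun k => (htk_pos k).ne')
  have hbound : Tendsto (fun k => κ * ‖ek k - (tk k)⁻¹ • (f (xk k + tk k • d) - f (xk k))‖)
      atTop (𝓝 0) := by
    simpa using ((hek.sub hquot).norm).const_mul κ
  have hdk : Tendsto (fun k => (tk k)⁻¹ • (xk' k - xk k)) atTop (𝓝 d) := by
    rw [tendsto_iff_norm_sub_tendsto_zero]
    refine squeeze_zero' (.of_forall fun _ => norm_nonneg _) ?_ hbound
    filter_upwards [hxk, hxk'] with k hk hk'
    exact norm_inv_smul_sub_sub_le (htk_pos k) hk.1 hk'.2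
  refine mem_paratingent_of_eventually hxk_lim hdk htk ?_
  filter_upwards [hxk, hxk'] with k hk hk'
  refine ⟨htk_pos k, ?_, ?_⟩
  · show f (xk k) ∈ D
    exact hk.1 ▸ (hmem k).1
  · show f (xk k + tk k • (tk k)⁻¹ • (xk' k - xk k)) ∈ D
    rw [smul_inv_smul₀ (htk_pos k).ne', add_sub_cancel, hk'.1]
    exact (hmem k).2

theorem paratingent_preimage_eq (hf : HasStrictFDerivAt f f' a) (hsurj : f'.range = ⊤)
    (D : Set F) : paratingent (f ⁻¹' D) a = f' ⁻¹' paratingent D (f a) :=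
  (hf.paratingent_preimage_subset D).antisymm (hf.preimage_paratingent_subset hsurj D)

end HasStrictFDerivAt

theorem paratingent_preimage_equality_general {n m : ℕ}
    (Φ : EuclideanSpace ℝ (Fin n) → EuclideanSpace ℝ (Fin m))
    (hΦ : ContDiff ℝ 1 Φ)
    (D : Set (EuclideanSpace ℝ (Fin m)))
    (xb : EuclideanSpace ℝ (Fin n))
    (hsurj : Function.Surjective (fderiv ℝ Φ xb)) :
    paratingent (Φ ⁻¹' D) xb
      = {d : EuclideanSpace ℝ (Fin n) | fderiv ℝ Φ xb d ∈ paratingent D (Φ xb)} :=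
  (hΦ.contDiffAt.hasStrictFDerivAt one_ne_zero).paratingent_preimage_eq
    (LinearMap.range_eq_top.2 hsurj) D

theorem paratingent_preimage_equality {n m : ℕ}
    (Φ : EuclideanSpace ℝ (Fin n) → EuclideanSpace ℝ (Fin m))
    (hΦ : ContDiff ℝ 1 Φ)
    (D : Set (EuclideanSpace ℝ (Fin m))) (hD : IsClosed D)
    (xb : EuclideanSpace ℝ (Fin n)) (hx : Φ xb ∈ D)
    (hlip : ∃ (L : NNReal) (ε : ℝ), 0 < ε ∧
      LipschitzOnWith L (fderiv ℝ Φ) (Metric.ball xb ε))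
    (hsurj : Function.Surjective (fderiv ℝ Φ xb)) :
    paratingent (Φ ⁻¹' D) xb
      = {d : EuclideanSpace ℝ (Fin n) | fderiv ℝ Φ xb d ∈ paratingent D (Φ xb)} :=
  paratingent_preimage_equality_general Φ hΦ D xb hsurj
end
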